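/- If an equivalence relation ~ of finite index on finite words over an alphabet Σ satisfies: for all sequences of finite words (u_i) and (u_i') with u_i ~ u_i' for all i, the infinite concatenation u_1 u_2 ⋯ is in L iff u_1' u_2' ⋯ is in L, then there exists an equivalence relation ≈ of finite index that satisfies the same condition and is additionally a congruence for concatenation (u_1 ≈ u_1' and u_2 ≈ u_2' implies u_1 u_2 ≈ u_1' u_2'). -/

import Mathlib

open Filter

variable {A : Type*}

/-- The interval coded by `p` occupies positions `p.1, …, p.1 + p.2 - 1` (length `p.2 > 0`). -/
def IntervalLt (p q : ℕ × ℕ) : Prop := p.1 + p.2 ≤ q.1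

def IntervalDisj (p q : ℕ × ℕ) : Prop := p.1 + p.2 ≤ q.1 ∨ q.1 + q.2 ≤ p.1

def prefixList (u : ℕ → List A) (m : ℕ) : List A := (List.range m).flatMap u

/-- Prepending a finite word to an ω-word. -/
def prepend (w : List A) (x : ℕ → A) : ℕ → A := fun n =>
  if h : n < w.length then w.get ⟨n, h⟩ else x (n - w.length)

open Classical in
/-- The infinite concatenation `u 0 · u 1 · u 2 ⋯` of a sequence of finite words, as an
ω-word; meaningful when infinitely many of the `u i` are nonempty. -/
noncomputable def omegaConcat [Inhabited A] (u : ℕ → List A) : ℕ → A := fun n =>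
  if h : ∃ m, n < (prefixList u m).length
  then (prefixList u (Nat.find h)).getD n default
  else default

/-- The ω-power `v^ω` of a finite word; meaningful when `v ≠ []`. -/
noncomputable def omegaPow [Inhabited A] (v : List A) : ℕ → A := fun n =>
  v.getD (n % v.length) default

/-- Infinitely many of the words `u i` are nonempty. -/
def InfOftenNonempty (u : ℕ → List A) : Prop := ∀ n, ∃ m, n ≤ m ∧ u m ≠ []

/-- A relation on finite words has finite index (finitely many classes). -/
def FiniteIndex (r : List A → List A → Prop) : Prop :=
  (Set.range fun w => {v | r w v}).Finite

/-- Compatibility with concatenation. -/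
def ConcatCongr (r : List A → List A → Prop) : Prop :=
  ∀ u₁ u₁' u₂ u₂' : List A, r u₁ u₁' → r u₂ u₂' → r (u₁ ++ u₂) (u₁' ++ u₂')

/-- The relation `r` recognizes `L`: relating the blocks of two infinite concatenations
pointwise preserves membership in `L`. -/
def Recognizes [Inhabited A] (r : List A → List A → Prop) (L : Set (ℕ → A)) : Prop :=
  ∀ u u' : ℕ → List A, InfOftenNonempty u → InfOftenNonempty u' →
    (∀ i, r (u i) (u' i)) → (omegaConcat u ∈ L ↔ omegaConcat u' ∈ L)

/-- Nondeterministic Büchi automaton. -/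
structure BuchiAutomaton (A : Type*) where
  Q : Type
  finQ : Finite Q
  init : Set Q
  step : Q → A → Set Q
  acc : Set Q

def BuchiAutomaton.Accepts (M : BuchiAutomaton A) (x : ℕ → A) : Prop :=
  ∃ ρ : ℕ → M.Q, ρ 0 ∈ M.init ∧ (∀ n, ρ (n + 1) ∈ M.step (ρ n) (x n)) ∧
    ∀ n, ∃ m, n ≤ m ∧ ρ m ∈ M.acc

def OmegaRegular (L : Set (ℕ → A)) : Prop :=
  ∃ M : BuchiAutomaton A, ∀ x, x ∈ L ↔ M.Accepts x

/-- ω-words over `{a, b}` (with `a = true`, `b = false`) of the form `a^{k₁} b a^{k₂} b ⋯`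
whose blocks of `a`'s have unbounded size. -/
def Uset : Set (ℕ → Bool) :=
  {x | (∀ n, ∃ m, n ≤ m ∧ x m = false) ∧ ∀ n, ∃ k, ∀ i < n, x (k + i) = true}

/-! The congruence is Arnold's syntactic congruence of `L`: `u ≈ v` when `u` and `v` are
interchangeable in every context `x·_·y·z^ω` and `x·(y·_·z)^ω`. It is a congruence by
associativity alone. Since `r` recognizes `L`, whether such a context lies in `L` depends only on
the `r`-classes of `x, y, z`, so the `≈`-class of `u` is fixed by finitely many data.
To see that `≈` recognizes `L`, Ramsey's theorem cuts `u` and `u'` at common positions into blocks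
all `r`-equivalent to one nonempty `e`, resp. `e'`; then `u ∈ L ↔ W·e^ω ∈ L`,
`u' ∈ L ↔ W'·e'^ω ∈ L`, and `W ≈ W'`, `e ≈ e'` lead from one context to the other. -/

/-- Infinite Ramsey theorem for pairs. -/
theorem exists_strictMono_forall_lt_eq {β : Type*} [Finite β] (c : ℕ → ℕ → β) :
    ∃ (g : ℕ → ℕ) (q : β), StrictMono g ∧ ∀ i j, i < j → c (g i) (g j) = q := by
  let U : Ultrafilter ℕ := hyperfilter ℕ
  -- each `a` has one colour `col a` towards `U`-almost all `b`, and `U`-almost all `a` share it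
  have : ∀ a, ∃ q, ∀ᶠ b in U, c a b = q := fun a =>
    Ultrafilter.eventually_exists_iff.1 (.of_forall fun b => ⟨_, rfl⟩)
  choose col hcol using this
  obtain ⟨q, hq⟩ : ∃ q, ∀ᶠ a in U, col a = q :=
    Ultrafilter.eventually_exists_iff.1 (.of_forall fun a => ⟨_, rfl⟩)
  let next (S : Set ℕ) : Set ℕ := {b ∈ S | sInf S < b ∧ c (sInf S) b = q}
  let T (n : ℕ) : Set ℕ := next^[n] {a | col a = q}
  have hT_succ (n : ℕ) : T (n + 1) = next (T n) := Function.iterate_succ_apply' next n _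
  have hT_anti : Antitone T := antitone_nat_of_succ_le fun n => by
    rw [hT_succ]
    exact Set.sep_subset _ _
  have hT (n : ℕ) : T n ∈ U := by
    induction n with
    | zero => exact hq
    | succ n ih =>
      have hmin : col (sInf (T n)) = q := hT_anti n.zero_le (Nat.sInf_mem (U.nonempty_of_mem ih))
      rw [hT_succ]
      exact inter_mem ih (inter_mem ((eventually_gt_atTop _).filter_mono Nat.hyperfilter_le_atTop)
        (hmin ▸ hcol _))
  have key (i j : ℕ) (hij : i < j) :
      sInf (T i) < sInf (T j) ∧ c (sInf (T i)) (sInf (T j)) = q := by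
    have hj : sInf (T j) ∈ T (i + 1) := hT_anti hij (Nat.sInf_mem (U.nonempty_of_mem (hT j)))
    rw [hT_succ] at hj
    exact hj.2
  exact ⟨fun n => sInf (T n), q, fun i j hij => (key i j hij).1, fun i j hij => (key i j hij).2⟩

section FiniteIndex

variable {r : List A → List A → Prop}

def classOf (r : List A → List A → Prop) (w : List A) :
    Set.range fun w : List A => {v | r w v} :=
  ⟨{v | r w v}, w, rfl⟩

lemma classOf_eq_iff (hr : Equivalence r) {x y : List A} : classOf r x = classOf r y ↔ r x y := by
  refine ⟨fun h => ?_, fun h => Subtype.ext <| Set.ext fun v => ?_⟩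
  · have hy : y ∈ (classOf r y : Set (List A)) := hr.refl y
    rwa [← h] at hy
  · exact ⟨hr.trans (hr.symm h), hr.trans h⟩

lemma FiniteIndex.finite_classes (hfin : FiniteIndex r) :
    Finite (Set.range fun w : List A => {v | r w v}) :=
  hfin.to_subtype

lemma FiniteIndex.of_ker {β : Type*} [Finite β] (f : List A → β) (hr : Equivalence r)
    (h : ∀ u v, f u = f v → r u v) : FiniteIndex r := by
  refine (Set.finite_range fun b : β => {v | ∃ w, f w = b ∧ r w v}).subset ?_
  rintro _ ⟨w, rfl⟩
  exact ⟨f w, Set.ext fun v => ⟨fun ⟨w', hw', hv⟩ => hr.trans (h w w' hw'.symm) hv,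
    fun hv => ⟨w, rfl, hv⟩⟩⟩

end FiniteIndex

def seqCons {α : Type*} (a : α) (s : ℕ → α) : ℕ → α
  | 0 => a
  | n + 1 => s n

def infixList (u : ℕ → List A) (a b : ℕ) : List A := (List.range' a (b - a)).flatMap u

section Words

variable (u : ℕ → List A)

@[simp] lemma infixList_self (a : ℕ) : infixList u a a = [] := by simp [infixList]

lemma infixList_append {a b c : ℕ} (hab : a ≤ b) (hbc : b ≤ c) :
    infixList u a b ++ infixList u b c = infixList u a c := by
  obtain ⟨k, rfl⟩ := Nat.exists_eq_add_of_le hab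
  obtain ⟨l, rfl⟩ := Nat.exists_eq_add_of_le hbc
  rw [infixList, infixList, infixList, ← List.flatMap_append, Nat.add_sub_cancel_left,
    show a + k + l - (a + k) = l by omega, show a + k + l - a = k + l by omega]
  simp

lemma infixList_succ {a b : ℕ} (h : a ≤ b) :
    infixList u a (b + 1) = infixList u a b ++ u b := by
  rw [← infixList_append u h b.le_succ]
  simp [infixList]

lemma prefixList_eq_infixList (m : ℕ) : prefixList u m = infixList u 0 m := by
  simp [prefixList, infixList, List.range_eq_range']

lemma prefixList_succ (m : ℕ) : prefixList u (m + 1) = prefixList u m ++ u m := by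
  rw [prefixList_eq_infixList, prefixList_eq_infixList, infixList_succ u m.zero_le]

lemma prefixList_seqCons_succ (w : List A) (m : ℕ) :
    prefixList (seqCons w u) (m + 1) = w ++ prefixList u m := by
  simp only [prefixList, List.range_succ_eq_map, List.flatMap_cons, List.flatMap_map]
  rfl

lemma prefixList_isPrefix {m k : ℕ} (h : m ≤ k) : prefixList u m <+: prefixList u k := by
  rw [prefixList_eq_infixList, prefixList_eq_infixList, ← infixList_append u m.zero_le h]
  exact List.prefix_append _ _

lemma exists_ne_nil_of_infixList_ne_nil {a b : ℕ} (h : infixList u a b ≠ []) :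
    ∃ m, a ≤ m ∧ m < b ∧ u m ≠ [] := by
  obtain ⟨m, ham, hmb, hm⟩ : ∃ m, a ≤ m ∧ m < a + (b - a) ∧ u m ≠ [] := by
    simpa [infixList, List.flatMap_eq_nil_iff] using h
  exact ⟨m, ham, by omega, hm⟩

lemma infixList_ne_nil {a b m : ℕ} (ham : a ≤ m) (hmb : m < b) (hm : u m ≠ []) :
    infixList u a b ≠ [] := by
  simp only [infixList, ne_eq, List.flatMap_eq_nil_iff, List.mem_range', not_forall]
  exact ⟨m, ⟨m - a, by omega, by omega⟩, hm⟩

lemma ConcatCongr.infixList {R : List A → List A → Prop} (hR : ConcatCongr R) (hnil : R [] [])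
    {u' : ℕ → List A} (h : ∀ i, R (u i) (u' i)) (a b : ℕ) :
    R (infixList u a b) (infixList u' a b) := by
  unfold _root_.infixList
  induction List.range' a (b - a) with
  | nil => exact hnil
  | cons i l ih => exact hR _ _ _ _ (h i) ih

end Words

lemma prepend_nil (x : ℕ → A) : prepend [] x = x := by
  funext n
  simp [prepend]

lemma prepend_append (v w : List A) (x : ℕ → A) :
    prepend (v ++ w) x = prepend v (prepend w x) := by
  funext n
  by_cases hv : n < v.length
  · simp [prepend, hv, List.getElem_append_left, Nat.lt_add_right]
  · by_cases hw : n - v.length < w.length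
    · simp [prepend, hv, hw, List.getElem_append_right (not_lt.1 hv),
        show n < v.length + w.length by omega]
    · simp [prepend, hv, hw, show ¬ n < v.length + w.length by omega, Nat.sub_sub]

section OmegaConcat

variable [Inhabited A]

lemma omegaConcat_eq_getD {u : ℕ → List A} {n m : ℕ} (h : n < (prefixList u m).length) :
    omegaConcat u n = (prefixList u m).getD n default := by
  have hex : ∃ m, n < (prefixList u m).length := ⟨m, h⟩
  have hfind : n < (prefixList u (Nat.find hex)).length := Nat.find_spec hex
  have hle : Nat.find hex ≤ m := Nat.find_le h
  rw [omegaConcat, dif_pos hex, List.getD_eq_getElem _ _ h, List.getD_eq_getElem _ _ hfind]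
  exact (prefixList_isPrefix u hle).getElem hfind

/-- Also in the junk case where all prefixes are shorter than `n`. -/
lemma omegaConcat_eventually_eq (u : ℕ → List A) (n : ℕ) :
    ∀ᶠ N in atTop, omegaConcat u n = (prefixList u N).getD n default := by
  by_cases hex : ∃ m, n < (prefixList u m).length
  · obtain ⟨m, hm⟩ := hex
    filter_upwards [eventually_ge_atTop m] with N hN
    exact omegaConcat_eq_getD (hm.trans_le (prefixList_isPrefix u hN).length_le)
  · push Not at hex
    refine Eventually.of_forall fun N => ?_
    rw [omegaConcat, dif_neg (by simpa using hex), List.getD_eq_default _ _ (hex N)]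

lemma omegaConcat_eq_of_prefixList_eq {u v : ℕ → List A} {φ ψ : ℕ → ℕ}
    (hφ : Tendsto φ atTop atTop) (hψ : Tendsto ψ atTop atTop)
    (h : ∀ N, prefixList u (φ N) = prefixList v (ψ N)) : omegaConcat u = omegaConcat v := by
  funext n
  obtain ⟨N, hu, hv⟩ :=
    ((hφ.eventually (omegaConcat_eventually_eq u n)).and
      (hψ.eventually (omegaConcat_eventually_eq v n))).exists
  rw [hu, hv, h]

lemma omegaConcat_seqCons (w : List A) (u : ℕ → List A) :
    omegaConcat (seqCons w u) = prepend w (omegaConcat u) := by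
  funext n
  obtain ⟨N, hcons, hu⟩ :=
    (((tendsto_add_atTop_nat 1).eventually (omegaConcat_eventually_eq (seqCons w u) n)).and
      (omegaConcat_eventually_eq u (n - w.length))).exists
  rw [hcons, prefixList_seqCons_succ, prepend]
  split_ifs with hn
  · rw [List.getD_append _ _ _ _ hn, List.getD_eq_getElem _ _ hn, List.get_eq_getElem]
  · rw [hu, List.getD_append_right _ _ _ _ (not_lt.1 hn)]

end OmegaConcat

def regroup (u : ℕ → List A) (g : ℕ → ℕ) : ℕ → List A :=
  fun i => infixList u (g i) (g (i + 1))

section Regroup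

variable {u : ℕ → List A} {g : ℕ → ℕ}

lemma prefixList_seqCons_regroup (hg : Monotone g) (N : ℕ) :
    prefixList (seqCons (infixList u 0 (g 0)) (regroup u g)) (N + 1) = prefixList u (g N) := by
  induction N with
  | zero =>
    rw [prefixList_seqCons_succ, prefixList_eq_infixList, prefixList_eq_infixList, infixList_self,
      List.append_nil]
  | succ N ih =>
    rw [prefixList_succ, ih, prefixList_eq_infixList, prefixList_eq_infixList]
    exact infixList_append u (Nat.zero_le _) (hg N.le_succ)

lemma omegaConcat_eq_prepend_regroup [Inhabited A] (hg : StrictMono g) :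
    omegaConcat u = prepend (infixList u 0 (g 0)) (omegaConcat (regroup u g)) := by
  rw [← omegaConcat_seqCons]
  exact omegaConcat_eq_of_prefixList_eq hg.tendsto_atTop (tendsto_add_atTop_nat 1)
    fun N => (prefixList_seqCons_regroup hg.monotone N).symm

lemma InfOftenNonempty.regroup (hu : InfOftenNonempty u) (hg : StrictMono g) :
    InfOftenNonempty (_root_.regroup u g) := by
  intro N
  obtain ⟨m, hm, hum⟩ := hu (g N)
  have hgN : StrictMono fun i => g (N + i) := fun a b h => hg (by omega)
  obtain ⟨i, hi, hi'⟩ := hgN.exists_between_of_tendsto_atTop hgN.tendsto_atTop (x := m + 1)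
    (Nat.lt_succ_of_le hm)
  exact ⟨N + i, by omega, infixList_ne_nil u (Nat.le_of_lt_succ hi) hi' hum⟩

lemma InfOftenNonempty.of_regroup (hu : InfOftenNonempty (_root_.regroup u g)) (hg : StrictMono g) :
    InfOftenNonempty u := by
  intro N
  obtain ⟨i, hi, hne⟩ := hu N
  obtain ⟨m, hm, -, hum⟩ := exists_ne_nil_of_infixList_ne_nil u hne
  exact ⟨m, hi.trans ((hg.id_le i).trans hm), hum⟩

end Regroup

lemma InfOftenNonempty.seqCons {u : ℕ → List A} (hu : InfOftenNonempty u) (w : List A) :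
    InfOftenNonempty (seqCons w u) := fun n =>
  let ⟨m, hm, hum⟩ := hu n
  ⟨m + 1, by omega, hum⟩

lemma infOftenNonempty_const {w : List A} (hw : w ≠ []) : InfOftenNonempty fun _ : ℕ => w :=
  fun n => ⟨n, le_rfl, hw⟩

def periodic3 (y u z : List A) : ℕ → List A := fun n => [y, u, z].getD (n % 3) []

lemma regroup_periodic3 (y u z : List A) :
    regroup (periodic3 y u z) (3 * ·) = fun _ => y ++ u ++ z := by
  funext i
  rw [regroup, show 3 * (i + 1) = 3 * i + 1 + 1 + 1 by ring, infixList_succ _ (by omega),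
    infixList_succ _ (by omega), infixList_succ _ le_rfl, infixList_self]
  simp [periodic3, Nat.add_mod]

lemma omegaConcat_periodic3 [Inhabited A] (y u z : List A) :
    omegaConcat (periodic3 y u z) = omegaConcat fun _ => y ++ u ++ z := by
  rw [omegaConcat_eq_prepend_regroup (g := (3 * ·)) (strictMono_mul_left_of_pos three_pos),
    regroup_periodic3]
  simp [prepend_nil]

section Recognizes

variable [Inhabited A] {L : Set (ℕ → A)} {r : List A → List A → Prop}

lemma Recognizes.linear_iff (hrec : Recognizes r L) (hrefl : ∀ w, r w w)
    {x x' y y' z z' : List A} (u : List A) (hx : r x x') (hy : r y y') (hz : r z z')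
    (hz₀ : z ≠ []) (hz₀' : z' ≠ []) :
    prepend (x ++ u ++ y) (omegaConcat fun _ => z) ∈ L ↔
      prepend (x' ++ u ++ y') (omegaConcat fun _ => z') ∈ L := by
  have key := hrec (seqCons x (seqCons u (seqCons y fun _ => z)))
    (seqCons x' (seqCons u (seqCons y' fun _ => z')))
    ((((infOftenNonempty_const hz₀).seqCons y).seqCons u).seqCons x)
    ((((infOftenNonempty_const hz₀').seqCons y').seqCons u).seqCons x')
    fun | 0 => hx | 1 => hrefl u | 2 => hy | _ + 3 => hz
  simpa only [omegaConcat_seqCons, prepend_append] using key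

lemma Recognizes.loop_iff (hrec : Recognizes r L) (hrefl : ∀ w, r w w)
    {x x' y y' z z' : List A} (u : List A) (hx : r x x') (hy : r y y') (hz : r z z')
    (hne : y ++ u ++ z ≠ []) (hne' : y' ++ u ++ z' ≠ []) :
    prepend x (omegaConcat fun _ => y ++ u ++ z) ∈ L ↔
      prepend x' (omegaConcat fun _ => y' ++ u ++ z') ∈ L := by
  have hper : ∀ {y z}, y ++ u ++ z ≠ [] → InfOftenNonempty (periodic3 y u z) := fun hne =>
    InfOftenNonempty.of_regroup (by rw [regroup_periodic3]; exact infOftenNonempty_const hne)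
      (strictMono_mul_left_of_pos three_pos)
  have hrel : ∀ i, r (periodic3 y u z i) (periodic3 y' u z' i) := by
    intro i
    rcases (by omega : i % 3 = 0 ∨ i % 3 = 1 ∨ i % 3 = 2) with h | h | h <;>
      simp [periodic3, h, hy, hz, hrefl]
  have key := hrec (seqCons x (periodic3 y u z)) (seqCons x' (periodic3 y' u z'))
    ((hper hne).seqCons x) ((hper hne').seqCons x') fun | 0 => hx | i + 1 => hrel i
  simpa only [omegaConcat_seqCons, omegaConcat_periodic3] using key

lemma Recognizes.mem_iff_of_regroup (hrec : Recognizes r L) (hrefl : ∀ w, r w w)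
    {u : ℕ → List A} {g : ℕ → ℕ} {e : List A} (hu : InfOftenNonempty u)
    (hg : StrictMono g) (he : e ≠ []) (h : ∀ i, r (regroup u g i) e) :
    omegaConcat u ∈ L ↔ prepend (infixList u 0 (g 0)) (omegaConcat fun _ => e) ∈ L := by
  rw [omegaConcat_eq_prepend_regroup hg, ← omegaConcat_seqCons, ← omegaConcat_seqCons]
  exact hrec _ _ ((hu.regroup hg).seqCons _) ((infOftenNonempty_const he).seqCons _)
    fun | 0 => hrefl _ | i + 1 => h i

end Recognizes

lemma append_ne_nil_iff_of_eq_nil_iff {u v : List A} (h : u = [] ↔ v = []) (y z : List A) :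
    y ++ u ++ z ≠ [] ↔ y ++ v ++ z ≠ [] := by
  simp [h]

section ContextEquiv

variable [Inhabited A] (L : Set (ℕ → A))

/-- The side conditions keep the periodic part nonempty, where `omegaConcat` is meaningful. -/
def ContextEquiv (u v : List A) : Prop :=
  (u = [] ↔ v = []) ∧
  (∀ x y z : List A, z ≠ [] →
    (prepend (x ++ u ++ y) (omegaConcat fun _ => z) ∈ L ↔
      prepend (x ++ v ++ y) (omegaConcat fun _ => z) ∈ L)) ∧
  ∀ x y z : List A, y ++ u ++ z ≠ [] →
    (prepend x (omegaConcat fun _ => y ++ u ++ z) ∈ L ↔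
      prepend x (omegaConcat fun _ => y ++ v ++ z) ∈ L)

lemma contextEquiv_equivalence : Equivalence (ContextEquiv L) where
  refl _ := ⟨Iff.rfl, fun _ _ _ _ => Iff.rfl, fun _ _ _ _ => Iff.rfl⟩
  symm := fun ⟨h0, hlin, hloop⟩ =>
    ⟨h0.symm, fun x y z hz => (hlin x y z hz).symm,
      fun x y z hne => (hloop x y z ((append_ne_nil_iff_of_eq_nil_iff h0 y z).2 hne)).symm⟩
  trans := fun ⟨h0, hlin, hloop⟩ ⟨h0', hlin', hloop'⟩ =>
    ⟨h0.trans h0', fun x y z hz => (hlin x y z hz).trans (hlin' x y z hz),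
      fun x y z hne => (hloop x y z hne).trans
        (hloop' x y z ((append_ne_nil_iff_of_eq_nil_iff h0 y z).1 hne))⟩

lemma contextEquiv_concatCongr : ConcatCongr (ContextEquiv L) := by
  rintro u₁ u₁' u₂ u₂' ⟨h0₁, hlin₁, hloop₁⟩ ⟨h0₂, hlin₂, hloop₂⟩
  refine ⟨by simp [h0₁, h0₂], fun x y z hz => ?_, fun x y z hne => ?_⟩
  · have h₂ := hlin₂ (x ++ u₁) y z hz
    have h₁ := hlin₁ x (u₂' ++ y) z hz
    simp only [List.append_assoc] at h₁ h₂ ⊢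
    exact h₂.trans h₁
  · have hne₂ : y ++ u₁ ++ u₂ ++ z ≠ [] := by simpa only [List.append_assoc] using hne
    have hne₁ : y ++ u₁ ++ (u₂' ++ z) ≠ [] := by
      simpa only [List.append_assoc] using
        (append_ne_nil_iff_of_eq_nil_iff h0₂ (y ++ u₁) z).1 hne₂
    have h₂ := hloop₂ x (y ++ u₁) z hne₂
    have h₁ := hloop₁ x y (u₂' ++ z) hne₁
    simp only [List.append_assoc] at h₁ h₂ ⊢
    exact h₂.trans h₁

end ContextEquiv

section Congruence

variable [Inhabited A] {L : Set (ℕ → A)} {r : List A → List A → Prop}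

theorem contextEquiv_finiteIndex (hr : Equivalence r) (hfin : FiniteIndex r)
    (hrec : Recognizes r L) : FiniteIndex (ContextEquiv L) := by
  have := hfin.finite_classes
  let κ : List A → _ × Prop := fun w => (classOf r w, w = [])
  let rep := Function.invFun κ
  have hrep : ∀ w, r w (rep (κ w)) ∧ (w = [] ↔ rep (κ w) = []) := fun w => by
    have h : κ (rep (κ w)) = κ w := Function.invFun_eq ⟨w, rfl⟩
    exact ⟨(classOf_eq_iff hr).1 (congrArg Prod.fst h).symm,
      Iff.of_eq (congrArg Prod.snd h).symm⟩
  let profile (u : List A) :=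
    (u = [],
      fun p : _ × _ × _ =>
        prepend (rep p.1 ++ u ++ rep p.2.1) (omegaConcat fun _ => rep p.2.2) ∈ L,
      fun p : _ × _ × _ =>
        prepend (rep p.1) (omegaConcat fun _ => rep p.2.1 ++ u ++ rep p.2.2) ∈ L)
  refine FiniteIndex.of_ker profile (contextEquiv_equivalence L) fun u v huv => ?_
  simp only [profile, Prod.mk.injEq] at huv
  obtain ⟨h0, hlin, hloop⟩ := huv
  refine ⟨Iff.of_eq h0, fun x y z hz => ?_, fun x y z hne => ?_⟩
  · have hz' : rep (κ z) ≠ [] := fun h => hz ((hrep z).2.2 h)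
    have hmove := fun w => hrec.linear_iff hr.refl w (hrep x).1 (hrep y).1 (hrep z).1 hz hz'
    rw [hmove u, hmove v]
    exact Iff.of_eq (congrFun hlin (κ x, κ y, κ z))
  · have hne_rep : ∀ {w}, y ++ w ++ z ≠ [] → rep (κ y) ++ w ++ rep (κ z) ≠ [] := by
      simp [← (hrep y).2, ← (hrep z).2]
    have hne' := (append_ne_nil_iff_of_eq_nil_iff (Iff.of_eq h0) y z).1 hne
    rw [hrec.loop_iff hr.refl u (hrep x).1 (hrep y).1 (hrep z).1 hne (hne_rep hne),
      hrec.loop_iff hr.refl v (hrep x).1 (hrep y).1 (hrep z).1 hne' (hne_rep hne')]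
    exact Iff.of_eq (congrFun hloop (κ x, κ y, κ z))

theorem contextEquiv_recognizes (hr : Equivalence r) (hfin : FiniteIndex r)
    (hrec : Recognizes r L) : Recognizes (ContextEquiv L) L := by
  intro u u' hu hu' huu'
  have := hfin.finite_classes
  obtain ⟨g, q, hg, hq⟩ := exists_strictMono_forall_lt_eq fun a b =>
    (classOf r (infixList u a b), classOf r (infixList u' a b))
  have hhom {i j k l : ℕ} (hij : i < j) (hkl : k < l) :
      r (infixList u (g i) (g j)) (infixList u (g k) (g l)) ∧
        r (infixList u' (g i) (g j)) (infixList u' (g k) (g l)) := by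
    simpa only [Prod.mk.injEq, classOf_eq_iff hr] using (hq i j hij).trans (hq k l hkl).symm
  have hcongr :=
    (contextEquiv_concatCongr L).infixList u ((contextEquiv_equivalence L).refl []) huu'
  obtain ⟨m, hm, hum⟩ := hu (g 0)
  set e := infixList u (g 0) (g (m + 1))
  set e' := infixList u' (g 0) (g (m + 1))
  have he : e ≠ [] := infixList_ne_nil u hm (Nat.lt_of_succ_le (hg.id_le (m + 1))) hum
  have he' : e' ≠ [] := fun h => he ((hcongr _ _).1.2 h)
  calc omegaConcat u ∈ L
      ↔ prepend (infixList u 0 (g 0)) (omegaConcat fun _ => e) ∈ L :=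
        hrec.mem_iff_of_regroup hr.refl hu hg he fun i => (hhom i.lt_succ_self m.succ_pos).1
    _ ↔ prepend (infixList u' 0 (g 0)) (omegaConcat fun _ => e) ∈ L := by
        simpa using (hcongr 0 (g 0)).2.1 [] [] e he
    _ ↔ prepend (infixList u' 0 (g 0)) (omegaConcat fun _ => e') ∈ L := by
        simpa using (hcongr _ _).2.2 (infixList u' 0 (g 0)) [] [] (by simpa using he)
    _ ↔ omegaConcat u' ∈ L := (hrec.mem_iff_of_regroup hr.refl hu' hg he' fun i =>
        (hhom i.lt_succ_self m.succ_pos).2).symm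

end Congruence

/-- If an equivalence relation of finite index recognizes `L`, then some equivalence
relation of finite index recognizes `L` and is moreover a congruence for concatenation. -/
theorem statement0 [Inhabited A] (L : Set (ℕ → A)) (r : List A → List A → Prop)
    (hequiv : Equivalence r) (hfin : FiniteIndex r) (hrec : Recognizes r L) :
    ∃ r' : List A → List A → Prop,
      Equivalence r' ∧ FiniteIndex r' ∧ Recognizes r' L ∧ ConcatCongr r' :=
  ⟨ContextEquiv L, contextEquiv_equivalence L, contextEquiv_finiteIndex hequiv hfin hrec,
    contextEquiv_recognizes hequiv hfin hrec, contextEquiv_concatCongr L⟩
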